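/- For all vectors a, b ∈ {0,1}^d, the Hamming distance between f_A(a) and f_B(b) satisfies ‖f_A(a) − f_B(b)‖_0 = 2d + 2·⟨a, b⟩, where ⟨a, b⟩ = Σ_{j=1}^d a_j b_j is the integer inner product. In particular ‖f_A(a) − f_B(b)‖_0 ≥ 2d always, with equality if and only if ⟨a, b⟩ = 0. -/

import Mathlib

/-- The coding map `g_A : {0,1} → {0,1}^5`, with
`g_A 0 = (1,1,0,0,0)` and `g_A 1 = (0,0,1,1,0)`. -/
def gA : Fin 2 → Fin 5 → Fin 2 := ![![1, 1, 0, 0, 0], ![0, 0, 1, 1, 0]]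

/-- The coding map `g_B : {0,1} → {0,1}^5`, with
`g_B 0 = (1,0,1,0,0)` and `g_B 1 = (0,1,0,0,1)`. -/
def gB : Fin 2 → Fin 5 → Fin 2 := ![![1, 0, 1, 0, 0], ![0, 1, 0, 0, 1]]

/-- `f_A(a) ∈ {0,1}^{5d}` is the concatenation of the blocks
`g_A(a_1), …, g_A(a_d)` (coordinates indexed by `Fin d × Fin 5`). -/
def fA (d : ℕ) (a : Fin d → Fin 2) : Fin d × Fin 5 → Fin 2 :=
  fun p => gA (a p.1) p.2

/-- `f_B(b) ∈ {0,1}^{5d}` is the concatenation of the blocks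
`g_B(b_1), …, g_B(b_d)`. -/
def fB (d : ℕ) (b : Fin d → Fin 2) : Fin d × Fin 5 → Fin 2 :=
  fun p => gB (b p.1) p.2

/-! The Hamming distance of two concatenations is the sum of the blockwise distances, and the
gadgets are built so that `g_A(x)` and `g_B(y)` differ in exactly `2 + 2xy` of their five
coordinates; summing over the `d` blocks gives `2d + 2⟨a, b⟩`. -/

theorem hammingDist_uncurry {ι κ α : Type*} [Fintype ι] [Fintype κ] [DecidableEq α]
    (x y : ι → κ → α) :
    hammingDist (Function.uncurry x) (Function.uncurry y) = ∑ i, hammingDist (x i) (y i) := by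
  simp only [hammingDist, Finset.card_filter, Fintype.sum_prod_type]
  rfl

theorem hammingDist_gA_gB (x y : Fin 2) : hammingDist (gA x) (gB y) = 2 + 2 * (x.val * y.val) := by
  fin_cases x <;> fin_cases y <;> decide

theorem hammingDist_fA_fB_eq_sum (d : ℕ) (a b : Fin d → Fin 2) :
    hammingDist (fA d a) (fB d b) = 2 * d + 2 * ∑ j, (a j).val * (b j).val := by
  change hammingDist (Function.uncurry (gA ∘ a)) (Function.uncurry (gB ∘ b)) = _
  simp only [hammingDist_uncurry, Function.comp_apply, hammingDist_gA_gB, Finset.sum_add_distrib,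
    ← Finset.mul_sum, Finset.sum_const, Finset.card_univ, Fintype.card_fin, smul_eq_mul, mul_comm d]

/-- For all `a, b ∈ {0,1}^d`, the Hamming distance between `f_A(a)` and
`f_B(b)` equals `2d + 2⟨a,b⟩` where `⟨a,b⟩` is the integer inner product; in
particular it is always at least `2d`, with equality iff `⟨a,b⟩ = 0`. -/
theorem hammingDist_fA_fB (d : ℕ) (a b : Fin d → Fin 2) :
    ((hammingDist (fA d a) (fB d b) : ℤ)
        = 2 * d + 2 * ∑ j, ((a j).val : ℤ) * ((b j).val : ℤ))
      ∧ 2 * d ≤ hammingDist (fA d a) (fB d b)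
      ∧ ((hammingDist (fA d a) (fB d b) : ℤ) = 2 * d
          ↔ ∑ j, ((a j).val : ℤ) * ((b j).val : ℤ) = 0) := by
  have hdist := hammingDist_fA_fB_eq_sum d a b
  have hcast : ∑ j, ((a j).val : ℤ) * ((b j).val : ℤ) = ((∑ j, (a j).val * (b j).val : ℕ) : ℤ) := by
    push_cast; rfl
  -- with `⟨a, b⟩` now a cast natural number, its nonnegativity is visible to `omega`
  rw [hcast, hdist]
  push_cast
  omega
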